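/- arXiv:2404.19450 — 2 statements merged into one kernel-verified Lean document; each statement's English description precedes it below -/
import Mathlib

section
/- Let G : ℝ × ℝⁿ → ℝ be a smooth function such that x ↦ G(x, 0) has a zero of finite order m at x = 0 (i.e., ∂^i G/∂x^i (0,0) = 0 for i = 0,...,m-1 and ∂^m G/∂x^m (0,0) ≠ 0). Then there exist a neighborhood V of (0,0) in ℝ × ℝⁿ such that for every parameter α with (x, α) ∈ V for the relevant x, the function x ↦ G(x, α) has at most m zeros x with (x,α) ∈ V. -/
open Set
open scoped ContDiff

/-- Iterated Rolle: a smooth function with `k+1` ordered zeros has a zero of its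
`k`-th derivative between the first and last of them. -/
lemma rolle_iter : ∀ (k : ℕ) (f : ℝ → ℝ), ContDiff ℝ ∞ f →
    ∀ (a : Fin (k + 1) → ℝ), StrictMono a → (∀ i, f (a i) = 0) →
    ∃ c, a 0 ≤ c ∧ c ≤ a (Fin.last k) ∧ iteratedDeriv k f c = 0 := by
  intro k
  induction k with
  | zero =>
    intro f hf a ha hz
    exact ⟨a 0, le_refl _, le_refl _, by simpa using hz 0⟩
  | succ k ih =>
    intro f hf a ha hz
    have hder : ∀ i : Fin (k + 1), ∃ c ∈ Ioo (a i.castSucc) (a i.succ), deriv f c = 0 := by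
      intro i
      have hlt : a i.castSucc < a i.succ := ha Fin.castSucc_lt_succ
      exact exists_deriv_eq_zero hlt (hf.continuous.continuousOn)
        (by rw [hz i.castSucc, hz i.succ])
    choose b hb hb' using hder
    have hbmono : StrictMono b := by
      intro i j hij
      have h1 : b i < a i.succ := (hb i).2
      have h2 : a j.castSucc < b j := (hb j).1
      have h3 : a i.succ ≤ a j.castSucc := by
        apply ha.monotone
        have := Fin.lt_def.mp hij
        rw [Fin.le_def, Fin.val_succ, Fin.coe_castSucc]
        omega
      linarith
    have hf' : ContDiff ℝ ∞ (deriv f) := (contDiff_infty_iff_deriv.mp hf).2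
    obtain ⟨c, hc1, hc2, hc3⟩ := ih (deriv f) hf' b hbmono hb'
    refine ⟨c, ?_, ?_, ?_⟩
    · have := (hb 0).1
      have h0 : a ((0 : Fin (k+1)).castSucc) = a 0 := by norm_num
      linarith [h0 ▸ this]
    · have := (hb (Fin.last k)).2
      have h0 : a ((Fin.last k).succ) = a (Fin.last (k+1)) := by rw [Fin.succ_last]
      linarith [h0 ▸ this]
    · rw [iteratedDeriv_succ']
      exact hc3

/-- From a finset of reals of card `k+1`, a strictly monotone enumeration. -/
lemma exists_strictMono_enum (T : Finset ℝ) {k : ℕ} (h : T.card = k + 1) :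
    ∃ a : Fin (k + 1) → ℝ, StrictMono a ∧ ∀ i, a i ∈ T := by
  refine ⟨fun i => (T.orderIsoOfFin h i : ℝ), ?_, fun i => (T.orderIsoOfFin h i).2⟩
  intro i j hij
  exact (T.orderIsoOfFin h).strictMono hij

/-- Root-counting consequence of the Malgrange preparation theorem: if
`x ↦ G(x, 0)` has a zero of finite order `m` at `x = 0`, then in some neighborhood `V`
of `(0,0)` in `ℝ × ℝⁿ`, for every parameter `α` the function `x ↦ G(x, α)` has at most
`m` zeros `x` with `(x, α) ∈ V`. -/
theorem at_most_m_zeros_near_finite_order_zero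
    (n : ℕ) (G : ℝ → (Fin n → ℝ) → ℝ)
    (hG : ContDiff ℝ (⊤ : ℕ∞) (fun p : ℝ × (Fin n → ℝ) => G p.1 p.2))
    (m : ℕ) (hm : 1 ≤ m)
    (hvanish : ∀ i < m, iteratedDeriv i (fun x => G x 0) 0 = 0)
    (hnonzero : iteratedDeriv m (fun x => G x 0) 0 ≠ 0) :
    ∃ V ∈ nhds ((0:ℝ), (0 : Fin n → ℝ)),
      ∀ α : Fin n → ℝ,
        {x : ℝ | (x, α) ∈ V ∧ G x α = 0}.Finite ∧
        {x : ℝ | (x, α) ∈ V ∧ G x α = 0}.ncard ≤ m := by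
  -- Joint smoothness of the iterated partial derivatives in the first variable.
  have hGi : ContDiff ℝ ∞ (fun p : ℝ × (Fin n → ℝ) => G p.1 p.2) := hG.of_le (by simp)
  have key : ∀ k : ℕ, ContDiff ℝ ∞
      (fun p : ℝ × (Fin n → ℝ) => iteratedDeriv k (fun x => G x p.2) p.1) := by
    intro k
    induction k with
    | zero => simpa [iteratedDeriv_zero] using hGi
    | succ k ihk =>
      have : (fun p : ℝ × (Fin n → ℝ) => iteratedDeriv (k+1) (fun x => G x p.2) p.1)
          = fun p : ℝ × (Fin n → ℝ) =>
              fderiv ℝ (fun x => iteratedDeriv k (fun y => G y p.2) x) p.1 1 := by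
        funext p
        rw [iteratedDeriv_succ]
        rfl
      rw [this]
      apply ContDiff.fderiv_apply
        (f := fun (p : ℝ × (Fin n → ℝ)) (x : ℝ) => iteratedDeriv k (fun y => G y p.2) x)
        (g := fun p => p.1) (k := fun _ => (1:ℝ)) (m := ∞) (n := ∞)
      · exact ihk.comp (contDiff_snd.prodMk (contDiff_snd.comp contDiff_fst))
      · exact contDiff_fst
      · exact contDiff_const
      · exact le_of_eq (show (∞ : WithTop ℕ∞) = ∞ + 1 from rfl)
  set H : ℝ × (Fin n → ℝ) → ℝ := fun p => iteratedDeriv m (fun x => G x p.2) p.1 with hH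
  have hHcont : Continuous H := (key m).continuous
  have hH0 : H (0, 0) ≠ 0 := hnonzero
  have hopen : IsOpen {p : ℝ × (Fin n → ℝ) | H p ≠ 0} := isOpen_ne_fun hHcont continuous_const
  obtain ⟨ε, hε, hball⟩ := Metric.isOpen_iff.mp hopen (0, 0) hH0
  refine ⟨Metric.ball (0:ℝ) ε ×ˢ Metric.ball (0 : Fin n → ℝ) ε,
    prod_mem_nhds (Metric.ball_mem_nhds _ hε) (Metric.ball_mem_nhds _ hε), ?_⟩
  intro α
  set S : Set ℝ := {x : ℝ | (x, α) ∈ Metric.ball (0:ℝ) ε ×ˢ Metric.ball (0 : Fin n → ℝ) ε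
      ∧ G x α = 0} with hS
  -- no strictly monotone (m+1)-tuple inside S
  have hno : ¬ ∃ a : Fin (m + 1) → ℝ, StrictMono a ∧ ∀ i, a i ∈ S := by
    rintro ⟨a, hamono, haS⟩
    have hα : α ∈ Metric.ball (0 : Fin n → ℝ) ε := ((haS 0).1).2
    have hfsmooth : ContDiff ℝ ∞ (fun x => G x α) := hGi.comp (contDiff_id.prodMk contDiff_const)
    obtain ⟨c, hc1, hc2, hc3⟩ := rolle_iter m (fun x => G x α) hfsmooth a hamono
      (fun i => (haS i).2)
    have ha0 : a 0 ∈ Metric.ball (0:ℝ) ε := ((haS 0).1).1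
    have halast : a (Fin.last m) ∈ Metric.ball (0:ℝ) ε := ((haS (Fin.last m)).1).1
    rw [Real.ball_eq_Ioo] at ha0 halast
    have hc : c ∈ Metric.ball (0:ℝ) ε := by
      rw [Real.ball_eq_Ioo]
      constructor
      · linarith [ha0.1]
      · linarith [halast.2]
    have hmem : ((c, α) : ℝ × (Fin n → ℝ)) ∈ Metric.ball ((0:ℝ), (0 : Fin n → ℝ)) ε := by
      rw [← ball_prod_same]
      exact ⟨hc, hα⟩
    have : H (c, α) ≠ 0 := hball hmem
    exact this hc3
  constructor
  · by_contra hinf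
    have hinf' : S.Infinite := hinf
    obtain ⟨t, hts, htfin, htcard⟩ := hinf'.exists_subset_ncard_eq (m + 1)
    have hcard : htfin.toFinset.card = m + 1 := by
      rw [Set.ncard_eq_toFinset_card t htfin] at htcard
      exact htcard
    obtain ⟨a, hamono, haT⟩ := exists_strictMono_enum htfin.toFinset hcard
    exact hno ⟨a, hamono, fun i => hts (htfin.mem_toFinset.mp (haT i))⟩
  · by_contra hlt
    push_neg at hlt
    have hmle : m + 1 ≤ S.ncard := hlt
    obtain ⟨t, hts, htcard⟩ := Set.exists_subset_card_eq hmle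
    have htfin : t.Finite := Set.finite_of_ncard_ne_zero (by omega)
    have hcard : htfin.toFinset.card = m + 1 := by
      rw [Set.ncard_eq_toFinset_card t htfin] at htcard
      exact htcard
    obtain ⟨a, hamono, haT⟩ := exists_strictMono_enum htfin.toFinset hcard
    exact hno ⟨a, hamono, fun i => hts (htfin.mem_toFinset.mp (haT i))⟩
end

section
/- Let Θ : [a, b] → ℝ be the solution of the scalar ODE dy/dx = Q(x, y) with Θ(a) = y₀ > 0, where Q(x,y) = φ(x,y)·∏_{i=1}^{m}(x - iδ)/F(x,y) with φ, F smooth and F bounded away from 0 on a compact neighborhood, a = 2δ, b = mδ, and y₀ = δ^m(1 + nδ) for a fixed integer n ≥ 1. Then for all sufficiently small δ > 0, Θ(x) = δ^m + O(δ^{m+1}) > 0 for all x ∈ (2δ, mδ). In particular the solution stays strictly positive on the whole interval. -/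
set_option maxHeartbeats 1000000

open Set Filter Topology in
lemma key_bound (g g' : ℝ → ℝ) (a b ε B : ℝ) (hab : a ≤ b) (hε : 0 < ε)
    (hderiv : ∀ x ∈ Icc a b, HasDerivAt g (g' x) x)
    (hbound : ∀ x ∈ Icc a b, |g x - g a| ≤ ε → |g' x| ≤ B)
    (hB : B * (b - a) < ε) :
    ∀ x ∈ Icc a b, |g x - g a| ≤ B * (b - a) := by
  have hB0 : 0 ≤ B := le_trans (abs_nonneg _) (hbound a ⟨le_rfl, hab⟩ (by simp [hε.le]))
  have mvt : ∀ d ∈ Icc a b, (∀ t ∈ Icc a d, |g t - g a| ≤ ε) →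
      ∀ x ∈ Icc a d, |g x - g a| ≤ B * (x - a) := by
    intro d hd hinv x hx
    have hsub : Icc a x ⊆ Icc a b := Icc_subset_Icc le_rfl (hx.2.trans hd.2)
    have h := (convex_Icc a x).norm_image_sub_le_of_norm_hasDerivWithin_le
      (fun t ht => (hderiv t (hsub ht)).hasDerivWithinAt)
      (fun t ht => by
        rw [Real.norm_eq_abs]
        exact hbound t (hsub ht) (hinv t ⟨ht.1, ht.2.trans hx.2⟩))
      (left_mem_Icc.2 hx.1) (right_mem_Icc.2 hx.1)
    rwa [Real.norm_eq_abs, Real.norm_eq_abs, abs_of_nonneg (sub_nonneg.2 hx.1)] at h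
  set A : Set ℝ := {x | x ∈ Icc a b ∧ ∀ t ∈ Icc a x, |g t - g a| ≤ ε} with hAdef
  have haA : a ∈ A := ⟨⟨le_rfl, hab⟩, fun t ht => by
    have : t = a := le_antisymm ht.2 ht.1
    simp [this, hε.le]⟩
  have hbdd : BddAbove A := ⟨b, fun x hx => hx.1.2⟩
  set c := sSup A with hc
  have hac : a ≤ c := le_csSup hbdd haA
  have hcb : c ≤ b := csSup_le ⟨a, haA⟩ fun x hx => hx.1.2
  have hIco : ∀ t ∈ Ico a c, |g t - g a| ≤ ε := by
    intro t ht
    obtain ⟨x, hxA, htx⟩ := exists_lt_of_lt_csSup ⟨a, haA⟩ ht.2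
    exact hxA.2 t ⟨ht.1, htx.le⟩
  have hinvc : ∀ t ∈ Icc a c, |g t - g a| ≤ ε := by
    intro t ht
    rcases lt_or_eq_of_le ht.2 with h | h
    · exact hIco t ⟨ht.1, h⟩
    · rcases eq_or_lt_of_le hac with h' | h'
      · rw [h, ← h']; simp [hε.le]
      · have hcc : c ∈ closure (Ico a c) := by
          rw [closure_Ico h'.ne]; exact ⟨hac, le_rfl⟩
        haveI : (𝓝[Ico a c] c).NeBot := mem_closure_iff_nhdsWithin_neBot.mp hcc
        have hcont : ContinuousAt (fun s => |g s - g a|) c :=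
          (((hderiv c ⟨hac, hcb⟩).continuousAt).sub continuousAt_const).abs
        rw [h]
        exact le_of_tendsto hcont.continuousWithinAt.tendsto
          (eventually_nhdsWithin_of_forall fun s hs => hIco s hs)
  have hceb : c = b := by
    by_contra hne
    have hclt : c < b := lt_of_le_of_ne hcb hne
    have hgc : |g c - g a| ≤ B * (c - a) := mvt c ⟨hac, hcb⟩ hinvc c ⟨hac, le_rfl⟩
    have hlt : |g c - g a| < ε :=
      lt_of_le_of_lt (hgc.trans (mul_le_mul_of_nonneg_left (by linarith) hB0)) hB
    have hcont : ContinuousAt (fun s => |g s - g a|) c :=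
      (((hderiv c ⟨hac, hcb⟩).continuousAt).sub continuousAt_const).abs
    have hU : {t | |g t - g a| < ε} ∈ 𝓝 c := hcont.preimage_mem_nhds (Iio_mem_nhds hlt)
    obtain ⟨r, hr, hball⟩ := Metric.mem_nhds_iff.mp hU
    set x := min (c + r/2) b with hxdef
    have hcx : c < x := lt_min (by linarith) hclt
    have hxA : x ∈ A := by
      refine ⟨⟨hac.trans hcx.le, min_le_right _ _⟩, fun t ht => ?_⟩
      rcases le_or_gt t c with h | h
      · exact hinvc t ⟨ht.1, h⟩
      · have htU : t ∈ Metric.ball c r := by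
          rw [Metric.mem_ball, Real.dist_eq, abs_of_pos (by linarith)]
          have h2 : t ≤ c + r/2 := ht.2.trans (min_le_left _ _)
          linarith
        exact (hball htU).le
    exact absurd (le_csSup hbdd hxA) (not_le.2 hcx)
  intro x hx
  exact (mvt b ⟨hab, le_rfl⟩ (hceb ▸ hinvc) x hx).trans
    (mul_le_mul_of_nonneg_left (sub_le_sub_right hx.2 a) hB0)



open Finset in
/-- Estimate (5.2): the solution `Θ_δ` of `dy/dx = φ(x,y) ∏_{i=1}^m (x - iδ) / F(x,y)`
with `Θ_δ(2δ) = δ^m (1 + nδ)` satisfies `Θ_δ(x) = δ^m + O(δ^{m+1}) > 0` on `(2δ, mδ)`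
for all sufficiently small `δ > 0`. -/
theorem solution_stays_positive
    (m n : ℕ) (hm : 2 < m) (hn : 1 ≤ n)
    (φ F : ℝ → ℝ → ℝ)
    (hφ : ContDiff ℝ (⊤ : ℕ∞) (fun p : ℝ × ℝ => φ p.1 p.2))
    (hF : ContDiff ℝ (⊤ : ℕ∞) (fun p : ℝ × ℝ => F p.1 p.2))
    (hFne : ∀ x y, F x y ≠ 0)
    (Θ : ℝ → ℝ → ℝ)
    (hinit : ∀ δ : ℝ, 0 < δ → Θ δ (2 * δ) = δ ^ m * (1 + n * δ))
    (hode : ∀ δ : ℝ, 0 < δ → ∀ x ∈ Set.Icc (2 * δ) (m * δ),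
      HasDerivAt (Θ δ)
        (φ x (Θ δ x) * (∏ i ∈ Finset.Icc 1 m, (x - i * δ)) / F x (Θ δ x)) x) :
    ∃ C > (0:ℝ), ∃ δ₁ > (0:ℝ), ∀ δ : ℝ, 0 < δ → δ < δ₁ →
      ∀ x ∈ Set.Ioo (2 * δ) (m * δ),
        |Θ δ x - δ ^ m| ≤ C * δ ^ (m + 1) ∧ 0 < Θ δ x := by
  -- bound on |φ/F| on the compact set [0,m] × [-1,1]
  have hqc : Continuous (fun p : ℝ × ℝ => |φ p.1 p.2 / F p.1 p.2|) :=
    (hφ.continuous.div hF.continuous fun p => hFne p.1 p.2).abs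
  obtain ⟨p₀, hp₀S, hKmax⟩ :=
    ((isCompact_Icc (a := (0:ℝ)) (b := (m:ℝ))).prod
      (isCompact_Icc (a := (-1:ℝ)) (b := (1:ℝ)))).exists_isMaxOn
    ⟨((0:ℝ), (0:ℝ)), ⟨⟨le_rfl, by positivity⟩, ⟨by norm_num, by norm_num⟩⟩⟩
    hqc.continuousOn
  set K : ℝ := |φ p₀.1 p₀.2 / F p₀.1 p₀.2| with hKdef
  have hK0 : 0 ≤ K := abs_nonneg _
  set D : ℝ := K * (m:ℝ)^m * m + 1 with hDdef
  set C : ℝ := D + n with hCdef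
  have hmm0 : (0:ℝ) ≤ K * (m:ℝ)^m := by positivity
  have hD1 : 1 ≤ D := le_add_of_nonneg_left (by positivity)
  have hC0 : 0 < C := by have : (0:ℝ) ≤ (n:ℝ) := Nat.cast_nonneg n; linarith
  refine ⟨C, hC0, min 1 (1/(C+2)), lt_min one_pos (by positivity), ?_⟩
  intro δ hδ hδlt x hx
  have hδ1 : δ < 1 := lt_of_lt_of_le hδlt (min_le_left _ _)
  have hδ2 : (C+2) * δ < 1 := by
    have h := lt_of_lt_of_le hδlt (min_le_right _ _)
    rw [lt_div_iff₀ (by linarith : (0:ℝ) < C+2)] at h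
    linarith
  have hm3 : (3:ℝ) ≤ (m:ℝ) := by exact_mod_cast hm
  have hn1 : (1:ℝ) ≤ (n:ℝ) := by exact_mod_cast hn
  have hab : 2*δ ≤ (m:ℝ)*δ := by nlinarith
  have hpm : 0 < δ^m := pow_pos hδ m
  have hpm1 : 0 < δ^(m+1) := pow_pos hδ (m+1)
  have hps : δ^(m+1) = δ^m * δ := pow_succ δ m
  have hpowm : δ^m ≤ δ := by
    calc δ^m ≤ δ^1 := pow_le_pow_of_le_one hδ.le hδ1.le (by omega)
    _ = δ := pow_one δ
  have hpowm1 : δ^(m+1) ≤ δ := by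
    calc δ^(m+1) ≤ δ^1 := pow_le_pow_of_le_one hδ.le hδ1.le (by omega)
    _ = δ := pow_one δ
  have hinitval := hinit δ hδ
  have hε : 0 < D * δ^(m+1) := mul_pos (by linarith) hpm1
  -- derivative bound
  have hbound : ∀ t ∈ Set.Icc (2*δ) ((m:ℝ)*δ),
      |Θ δ t - Θ δ (2*δ)| ≤ D * δ^(m+1) →
      |φ t (Θ δ t) * (∏ i ∈ Finset.Icc 1 m, (t - i * δ)) / F t (Θ δ t)|
        ≤ K * (m:ℝ)^m * δ^m := by
    intro t ht hinv
    have hgt1 : |Θ δ t| ≤ 1 := by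
      have h1 := abs_add_le (Θ δ t - Θ δ (2*δ)) (Θ δ (2*δ))
      rw [sub_add_cancel] at h1
      have h2 : |Θ δ (2*δ)| = δ^m * (1 + n*δ) := by
        rw [hinitval]; exact abs_of_nonneg (by positivity)
      have e1 : D*δ^(m+1) ≤ D*δ := mul_le_mul_of_nonneg_left hpowm1 (by linarith)
      have e2 : δ^m*(1+(n:ℝ)*δ) = δ^m + n*δ^(m+1) := by rw [hps]; ring
      have e3 : (n:ℝ)*δ^(m+1) ≤ n*δ :=
        mul_le_mul_of_nonneg_left hpowm1 (Nat.cast_nonneg n)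
      have hCδ : C*δ = D*δ + (n:ℝ)*δ := by rw [hCdef]; ring
      have : D * δ^(m+1) + δ^m*(1+(n:ℝ)*δ) ≤ 1 := by
        rw [e2]; nlinarith
      linarith [h1, hinv, h2.le, h2.ge]
    have htm : (t, Θ δ t) ∈ Set.Icc (0:ℝ) (m:ℝ) ×ˢ Set.Icc (-1:ℝ) (1:ℝ) := by
      refine ⟨⟨by nlinarith [ht.1], ?_⟩, abs_le.mp hgt1⟩
      have := ht.2
      nlinarith
    have hqb : |φ t (Θ δ t) / F t (Θ δ t)| ≤ K := hKmax htm
    have hP : |∏ i ∈ Finset.Icc 1 m, (t - i * δ)| ≤ ((m:ℝ)*δ)^m := by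
      rw [Finset.abs_prod]
      calc ∏ i ∈ Finset.Icc 1 m, |t - (i:ℝ)*δ|
          ≤ ∏ _i ∈ Finset.Icc 1 m, ((m:ℝ)*δ) := by
            refine Finset.prod_le_prod (fun i _ => abs_nonneg _) (fun i hi => ?_)
            obtain ⟨hi1, him⟩ := Finset.mem_Icc.mp hi
            have hi1' : (1:ℝ) ≤ (i:ℝ) := by exact_mod_cast hi1
            have him' : (i:ℝ) ≤ (m:ℝ) := by exact_mod_cast him
            rw [abs_le]
            constructor <;> nlinarith [ht.1, ht.2]
      _ = ((m:ℝ)*δ)^m := by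
            rw [Finset.prod_const, Nat.card_Icc]
            norm_num
    have heq : φ t (Θ δ t) * (∏ i ∈ Finset.Icc 1 m, (t - i * δ)) / F t (Θ δ t)
        = (φ t (Θ δ t) / F t (Θ δ t)) * (∏ i ∈ Finset.Icc 1 m, (t - i * δ)) := by
      ring
    rw [heq, abs_mul]
    calc |φ t (Θ δ t) / F t (Θ δ t)| * |∏ i ∈ Finset.Icc 1 m, (t - i * δ)|
        ≤ K * ((m:ℝ)*δ)^m := mul_le_mul hqb hP (abs_nonneg _) hK0
    _ = K * (m:ℝ)^m * δ^m := by rw [mul_pow]; ring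
  have hBlt : K * (m:ℝ)^m * δ^m * ((m:ℝ)*δ - 2*δ) < D * δ^(m+1) := by
    have heq : K * (m:ℝ)^m * δ^m * ((m:ℝ)*δ - 2*δ)
        = K * (m:ℝ)^m * ((m:ℝ)-2) * δ^(m+1) := by rw [hps]; ring
    have h1 : K * (m:ℝ)^m * ((m:ℝ)-2) < D := by nlinarith
    rw [heq]
    exact mul_lt_mul_of_pos_right h1 hpm1
  have key := key_bound (Θ δ)
    (fun t => φ t (Θ δ t) * (∏ i ∈ Finset.Icc 1 m, (t - i * δ)) / F t (Θ δ t))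
    (2*δ) ((m:ℝ)*δ) (D * δ^(m+1)) (K * (m:ℝ)^m * δ^m) hab hε
    (hode δ hδ) hbound hBlt
  have hxI : x ∈ Set.Icc (2*δ) ((m:ℝ)*δ) := ⟨hx.1.le, hx.2.le⟩
  have hgx := key x hxI
  have hBb : K * (m:ℝ)^m * δ^m * ((m:ℝ)*δ - 2*δ) ≤ (D - 1) * δ^(m+1) := by
    have heq : K * (m:ℝ)^m * δ^m * ((m:ℝ)*δ - 2*δ)
        = K * (m:ℝ)^m * ((m:ℝ)-2) * δ^(m+1) := by rw [hps]; ring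
    rw [heq]
    have h1 : K * (m:ℝ)^m * ((m:ℝ)-2) ≤ D - 1 := by nlinarith
    exact mul_le_mul_of_nonneg_right h1 hpm1.le
  have hia : |Θ δ (2*δ) - δ^m| = (n:ℝ) * δ^(m+1) := by
    rw [hinitval]
    have : δ^m * (1 + (n:ℝ)*δ) - δ^m = (n:ℝ)*δ^(m+1) := by rw [hps]; ring
    rw [this]
    exact abs_of_nonneg (by positivity)
  have hmain : |Θ δ x - δ^m| ≤ C * δ^(m+1) := by
    have h1 := abs_sub_le (Θ δ x) (Θ δ (2*δ)) (δ^m)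
    have : C * δ^(m+1) = (D - 1) * δ^(m+1) + (n:ℝ)*δ^(m+1) + δ^(m+1) := by
      rw [hCdef]; ring
    linarith [hgx.trans hBb]
  refine ⟨hmain, ?_⟩
  have hlow : δ^m - C * δ^(m+1) ≤ Θ δ x := by
    have := (abs_le.mp hmain).1
    linarith
  have : 0 < δ^m - C * δ^(m+1) := by
    rw [hps]
    have h2 : 0 < δ^m * (1 - C*δ) := mul_pos hpm (by nlinarith)
    nlinarith [h2]
  linarith
end
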